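/- The scoped message-passing execution with synchronizing scopes and a stale read violates SRC11 Coherence: let E = {e₀, e₁, e₂, e₃, e₄, e₅} with loc e₀ = loc e₂ = loc e₅ = X and loc e₁ = loc e₃ = loc e₄ = Y; let W = {e₀, e₁, e₂, e₃}, Wrlx = W, Erel = {e₂, e₃}, Eacq = {e₄}, F = ∅, Esc = ∅, Fsc = ∅; let incl relate every pair of same-location events; let po be the transitive closure of {(e₀,e₂), (e₁,e₂), (e₀,e₄), (e₁,e₄), (e₂,e₃), (e₄,e₅)}, rf = {(e₃,e₄), (e₀,e₅)}, co = {(e₀,e₂), (e₁,e₃)}, rmw = ∅. Then hb;eco^? is not irreflexive; in particular (e₂, e₂) ∈ hb;eco, via hb(e₂,e₅) obtained from po(e₂,e₃), (incl ∩ sw)(e₃,e₄), po(e₄,e₅), composed with fr(e₅,e₂). -/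
import Mathlib


namespace SRC11

variable {E Loc : Type*}

/-- Relational composition `r;s`. -/
def rcomp (r s : E → E → Prop) : E → E → Prop := fun a c => ∃ b, r a b ∧ s b c
/-- Union of relations. -/
def runion (r s : E → E → Prop) : E → E → Prop := fun a b => r a b ∨ s a b
/-- Intersection of relations. -/
def rinter (r s : E → E → Prop) : E → E → Prop := fun a b => r a b ∧ s a b
/-- Inverse `r⁻¹`. -/
def rinv (r : E → E → Prop) : E → E → Prop := fun a b => r b a
/-- Identity relation restricted to a predicate: `[A]`. -/
def rid (A : E → Prop) : E → E → Prop := fun a b => a = b ∧ A a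
/-- Reflexive closure `r^?`. -/
def ropt (r : E → E → Prop) : E → E → Prop := fun a b => a = b ∨ r a b
/-- Transitive closure `r⁺`. -/
def rtrans (r : E → E → Prop) : E → E → Prop := Relation.TransGen r
/-- Reflexive-transitive closure `r^*`. -/
def rstar (r : E → E → Prop) : E → E → Prop := Relation.ReflTransGen r
/-- `r|loc` : restriction to same-location pairs. -/
def sameLoc (loc : E → Loc) (r : E → E → Prop) : E → E → Prop :=
  fun a b => r a b ∧ loc a = loc b
/-- `r|≠loc` : restriction to different-location pairs. -/
def diffLoc (loc : E → Loc) (r : E → E → Prop) : E → E → Prop :=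
  fun a b => r a b ∧ loc a ≠ loc b
/-- A relation is irreflexive. -/
def Irrefl (r : E → E → Prop) : Prop := ∀ a, ¬ r a a
/-- A relation is acyclic if its transitive closure is irreflexive. -/
def Acyclic (r : E → E → Prop) : Prop := Irrefl (rtrans r)

/-- from-read: `fr = rf⁻¹;co`. -/
def fr (rf co : E → E → Prop) : E → E → Prop := rcomp (rinv rf) co

/-- extended coherence order: `eco = (rf ∪ co ∪ fr)⁺`. -/
def eco (rf co : E → E → Prop) : E → E → Prop :=
  rtrans (runion rf (runion co (fr rf co)))

/-- release sequence: `rseq = [W];(po|loc)^?;[Wrlx];((incl ∩ rf);rmw)^*`. -/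
def rseq (loc : E → Loc) (W Wrlx : E → Prop) (incl po rf rmw : E → E → Prop) :
    E → E → Prop :=
  rcomp (rid W) (rcomp (ropt (sameLoc loc po))
    (rcomp (rid Wrlx) (rstar (rcomp (rinter incl rf) rmw))))

/-- `prel = [Erel];([F];po)^?`. -/
def prel (Erel F : E → Prop) (po : E → E → Prop) : E → E → Prop :=
  rcomp (rid Erel) (ropt (rcomp (rid F) po))

/-- `pacq = (po;[F])^?;[Eacq]`. -/
def pacq (Eacq F : E → Prop) (po : E → E → Prop) : E → E → Prop :=
  rcomp (ropt (rcomp po (rid F))) (rid Eacq)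

/-- synchronizes-with: `sw = prel;rseq;(incl ∩ rf);pacq`. -/
def sw (loc : E → Loc) (W Wrlx Erel Eacq F : E → Prop)
    (incl po rf rmw : E → E → Prop) : E → E → Prop :=
  rcomp (prel Erel F po) (rcomp (rseq loc W Wrlx incl po rf rmw)
    (rcomp (rinter incl rf) (pacq Eacq F po)))

/-- happens-before: `hb = (po ∪ (incl ∩ sw))⁺`. -/
def hb (loc : E → Loc) (W Wrlx Erel Eacq F : E → Prop)
    (incl po rf rmw : E → E → Prop) : E → E → Prop :=
  rtrans (runion po (rinter incl (sw loc W Wrlx Erel Eacq F incl po rf rmw)))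

/-- `scb = po ∪ (po|≠loc;hb;po|≠loc) ∪ hb|loc ∪ co ∪ fr`. -/
def scb (loc : E → Loc) (W Wrlx Erel Eacq F : E → Prop)
    (incl po rf co rmw : E → E → Prop) : E → E → Prop :=
  runion po (runion
    (rcomp (diffLoc loc po)
      (rcomp (hb loc W Wrlx Erel Eacq F incl po rf rmw) (diffLoc loc po)))
    (runion (sameLoc loc (hb loc W Wrlx Erel Eacq F incl po rf rmw))
      (runion co (fr rf co))))

/-- `pscb = ([Esc] ∪ [Fsc];hb^?);scb;([Esc] ∪ hb^?;[Fsc])`. -/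
def pscb (loc : E → Loc) (W Wrlx Erel Eacq F Esc Fsc : E → Prop)
    (incl po rf co rmw : E → E → Prop) : E → E → Prop :=
  rcomp (runion (rid Esc)
      (rcomp (rid Fsc) (ropt (hb loc W Wrlx Erel Eacq F incl po rf rmw))))
    (rcomp (scb loc W Wrlx Erel Eacq F incl po rf co rmw)
      (runion (rid Esc)
        (rcomp (ropt (hb loc W Wrlx Erel Eacq F incl po rf rmw)) (rid Fsc))))

/-- `pscf = [Fsc];(hb ∪ hb;eco;hb);[Fsc]`. -/
def pscf (loc : E → Loc) (W Wrlx Erel Eacq F Fsc : E → Prop)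
    (incl po rf co rmw : E → E → Prop) : E → E → Prop :=
  rcomp (rid Fsc)
    (rcomp (runion (hb loc W Wrlx Erel Eacq F incl po rf rmw)
        (rcomp (hb loc W Wrlx Erel Eacq F incl po rf rmw)
          (rcomp (eco rf co) (hb loc W Wrlx Erel Eacq F incl po rf rmw))))
      (rid Fsc))

/-- `psc = pscb ∪ pscf`. -/
def psc (loc : E → Loc) (W Wrlx Erel Eacq F Esc Fsc : E → Prop)
    (incl po rf co rmw : E → E → Prop) : E → E → Prop :=
  runion (pscb loc W Wrlx Erel Eacq F Esc Fsc incl po rf co rmw)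
    (pscf loc W Wrlx Erel Eacq F Fsc incl po rf co rmw)

end SRC11

namespace MP

/-- Locations: `0 = X`, `1 = Y`. -/
def loc : Fin 6 → Fin 2 := ![0, 1, 0, 1, 1, 0]
/-- Writes: the initialization writes `e₀, e₁` and the release writes `e₂, e₃`. -/
def W : Fin 6 → Prop := fun e => e = 0 ∨ e = 1 ∨ e = 2 ∨ e = 3
/-- Writes of order at least rlx (all writes). -/
def Wrlx : Fin 6 → Prop := W
/-- Events of order at least rel: the release writes `e₂, e₃`. -/
def Erel : Fin 6 → Prop := fun e => e = 2 ∨ e = 3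
/-- Events of order at least acq: the acquire read `e₄`. -/
def Eacq : Fin 6 → Prop := fun e => e = 4
/-- Fences: none. -/
def F : Fin 6 → Prop := fun _ => False
/-- Synchronizing scopes: every pair of same-location events is scope-inclusive. -/
def incl : Fin 6 → Fin 6 → Prop := fun a b => loc a = loc b
/-- Generators of program order. -/
def poBase : Fin 6 → Fin 6 → Prop := fun a b =>
  (a = 0 ∧ b = 2) ∨ (a = 1 ∧ b = 2) ∨ (a = 0 ∧ b = 4) ∨
  (a = 1 ∧ b = 4) ∨ (a = 2 ∧ b = 3) ∨ (a = 4 ∧ b = 5)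
/-- Program order: the transitive closure of the generators. -/
def po : Fin 6 → Fin 6 → Prop := Relation.TransGen poBase
/-- Reads-from. -/
def rf : Fin 6 → Fin 6 → Prop := fun a b => (a = 3 ∧ b = 4) ∨ (a = 0 ∧ b = 5)
/-- Coherence order. -/
def co : Fin 6 → Fin 6 → Prop := fun a b => (a = 0 ∧ b = 2) ∨ (a = 1 ∧ b = 3)
/-- RMW pairs: none. -/
def rmw : Fin 6 → Fin 6 → Prop := fun _ _ => False

end MP

open SRC11 MP in
/-- the scoped message-passing execution with synchronizing scopes
and a stale read violates SRC11 Coherence: `hb;eco^?` is not irreflexive, and in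
particular `(e₂, e₂) ∈ hb;eco`, via `hb(e₂,e₅)` obtained from `po(e₂,e₃)`,
`(incl ∩ sw)(e₃,e₄)`, `po(e₄,e₅)`, composed with `fr(e₅,e₂)`. -/
theorem mp_synchronizing_violates_coherence :
    ¬ SRC11.Irrefl (rcomp (hb loc W Wrlx Erel Eacq F incl po rf rmw)
        (ropt (eco rf co))) ∧
    rcomp (hb loc W Wrlx Erel Eacq F incl po rf rmw) (eco rf co) 2 2 ∧
    po 2 3 ∧
    rinter incl (sw loc W Wrlx Erel Eacq F incl po rf rmw) 3 4 ∧
    po 4 5 ∧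
    hb loc W Wrlx Erel Eacq F incl po rf rmw 2 5 ∧
    fr rf co 5 2 := by
  have hpo23 : po 2 3 := Relation.TransGen.single (by simp [poBase])
  have hpo45 : po 4 5 := Relation.TransGen.single (by simp [poBase])
  have hincl34 : incl 3 4 := by simp [incl, loc]
  have hsw : sw loc W Wrlx Erel Eacq F incl po rf rmw 3 4 := by
    refine ⟨3, ⟨3, ⟨rfl, Or.inr rfl⟩, Or.inl rfl⟩, 3,
      ⟨3, ⟨rfl, by simp [W]⟩, 3, Or.inl rfl, 3, ⟨rfl, by simp [Wrlx, W]⟩,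
        Relation.ReflTransGen.refl⟩, 4, ⟨hincl34, Or.inl ⟨rfl, rfl⟩⟩,
      4, Or.inl rfl, rfl, rfl⟩
  have hswi : rinter incl (sw loc W Wrlx Erel Eacq F incl po rf rmw) 3 4 :=
    ⟨hincl34, hsw⟩
  have hhb : hb loc W Wrlx Erel Eacq F incl po rf rmw 2 5 :=
    Relation.TransGen.head (Or.inl hpo23)
      (Relation.TransGen.head (Or.inr hswi)
        (Relation.TransGen.single (Or.inl hpo45)))
  have hfr : fr rf co 5 2 := ⟨0, Or.inr ⟨rfl, rfl⟩, Or.inl ⟨rfl, rfl⟩⟩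
  have heco : eco rf co 5 2 := Relation.TransGen.single (Or.inr (Or.inr hfr))
  refine ⟨fun h => h 2 ⟨5, hhb, Or.inr heco⟩, ⟨5, hhb, heco⟩, hpo23, hswi, hpo45, hhb, hfr⟩
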